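/- Unbiased gradient estimator: with notation as in the repeated-parameter shift rule, if i is sampled uniformly from {0,…,n−1}, s uniformly from {−1,+1}, and x is sampled from the output distribution Q(x|s,i) of the shifted circuit with measurement costs λ(x), then the random variable n·s·λ(x) has expectation equal to f'(θ), where f(θ) = Σ_x λ(x) Q_θ(x). -/

import Mathlib

/-!
Write the circuit output as a function `g(θ₀, …, θₙ₋₁)` of independent gate angles, so that
`f(θ) = L(g(θ, …, θ))` for the linear functional `L M = ∑ₓ λ(x) tr(Πₓ M)`. Each gate channel is
`ρ ↦ A ρ + cos t · B ρ + sin t · C ρ` with `A, B, C` linear, and each of `1, cos, sin` has derivative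
`(φ(t + π/2) - φ(t - π/2)) / 2`. By the product rule (an induction on the number of gates, for all
linear functionals at once) the derivative of `f` is the sum over gates of these shift
differences, which is the expectation of `n · s · λ(x)`: the factors `1/n` and `n` cancel.
-/

open Real Matrix

/-- The Pauli rotation unitary `U(θ) = exp(-i(θ/2)σ) = cos(θ/2)·I - i·sin(θ/2)·σ`. -/
noncomputable def pauliRot {D : ℕ} (σ : Matrix (Fin D) (Fin D) ℂ) (θ : ℝ) :
    Matrix (Fin D) (Fin D) ℂ :=
  (Real.cos (θ / 2) : ℂ) • (1 : Matrix (Fin D) (Fin D) ℂ) -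
    (Complex.I * (Real.sin (θ / 2) : ℂ)) • σ

/-- The conjugation channel `𝒰_θ(ρ) = U(θ) ρ U(θ)†`. -/
noncomputable def pauliRotChannel {D : ℕ} (σ : Matrix (Fin D) (Fin D) ℂ) (θ : ℝ)
    (ρ : Matrix (Fin D) (Fin D) ℂ) : Matrix (Fin D) (Fin D) ℂ :=
  pauliRot σ θ * ρ * (pauliRot σ θ)ᴴ

/-- The circuit `𝒲_n ∘ 𝒰_{θ_{n-1}} ∘ 𝒲_{n-1} ∘ ⋯ ∘ 𝒰_{θ_0} ∘ 𝒲_0`. -/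
noncomputable def rotChain {D : ℕ} (σ : Matrix (Fin D) (Fin D) ℂ) :
    (n : ℕ) →
    (Fin (n + 1) → Matrix (Fin D) (Fin D) ℂ →ₗ[ℂ] Matrix (Fin D) (Fin D) ℂ) →
    (Fin n → ℝ) → Matrix (Fin D) (Fin D) ℂ → Matrix (Fin D) (Fin D) ℂ
  | 0, W, _, ρ => W 0 ρ
  | n + 1, W, θs, ρ =>
      W (Fin.last (n + 1)) (pauliRotChannel σ (θs (Fin.last n))
        (rotChain σ n (fun i => W i.castSucc) (fun i => θs i.castSucc) ρ))

noncomputable def trigBasis : Fin 3 → ℝ → ℂ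
  | 0, _ => 1
  | 1, t => Real.cos t
  | 2, t => Real.sin t

theorem trigBasis_hasDerivAt (k : Fin 3) (θ : ℝ) :
    HasDerivAt (trigBasis k)
      (∑ s ∈ ({-1, 1} : Finset ℝ), (s : ℂ) / 2 * trigBasis k (θ + s * (π / 2))) θ := by
  rw [Finset.sum_pair (by norm_num)]
  match k with
  | 0 => exact (hasDerivAt_const θ (1 : ℂ)).congr_deriv (by norm_num [trigBasis])
  | 1 =>
    refine (Real.hasDerivAt_cos θ).ofReal_comp.congr_deriv ?_
    simp [trigBasis, ← sub_eq_add_neg, Complex.cos_sub_pi_div_two, Complex.cos_add_pi_div_two]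
    ring
  | 2 =>
    refine (Real.hasDerivAt_sin θ).ofReal_comp.congr_deriv ?_
    simp [trigBasis, ← sub_eq_add_neg, Complex.sin_sub_pi_div_two, Complex.sin_add_pi_div_two]
    ring

section RotChain

variable {D : ℕ} (σ : Matrix (Fin D) (Fin D) ℂ)

noncomputable def pauliRotComponent :
    Fin 3 → Matrix (Fin D) (Fin D) ℂ →ₗ[ℂ] Matrix (Fin D) (Fin D) ℂ
  | 0 => (1 / 2 : ℂ) • (LinearMap.id + LinearMap.mulLeft ℂ σ ∘ₗ LinearMap.mulRight ℂ σ)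
  | 1 => (1 / 2 : ℂ) • (LinearMap.id - LinearMap.mulLeft ℂ σ ∘ₗ LinearMap.mulRight ℂ σ)
  | 2 => (Complex.I / 2) • (LinearMap.mulRight ℂ σ - LinearMap.mulLeft ℂ σ)

theorem pauliRotChannel_eq_sum (hherm : σᴴ = σ) (t : ℝ) (M : Matrix (Fin D) (Fin D) ℂ) :
    pauliRotChannel σ t M = ∑ k, trigBasis k t • pauliRotComponent σ k M := by
  have hadj : (pauliRot σ t)ᴴ =
      (Real.cos (t / 2) : ℂ) • 1 + (Complex.I * (Real.sin (t / 2) : ℂ)) • σ := by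
    simp [pauliRot, hherm, sub_eq_add_neg, -Complex.ofReal_cos, -Complex.ofReal_sin]
  have hcos : Complex.cos t = 2 * Complex.cos (t / 2) ^ 2 - 1 := by
    rw [← Complex.cos_two_mul, mul_div_cancel₀ _ two_ne_zero]
  have hsin : Complex.sin t = 2 * Complex.sin (t / 2) * Complex.cos (t / 2) := by
    rw [← Complex.sin_two_mul, mul_div_cancel₀ _ two_ne_zero]
  rw [pauliRotChannel, hadj, pauliRot, Fin.sum_univ_three]
  simp only [trigBasis, pauliRotComponent, LinearMap.smul_apply, LinearMap.add_apply,
    LinearMap.sub_apply, LinearMap.id_apply, LinearMap.comp_apply, LinearMap.mulLeft_apply,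
    LinearMap.mulRight_apply, sub_mul, mul_add, smul_mul_assoc, mul_smul_comm, one_mul, mul_one,
    smul_smul, smul_add, smul_sub, ← mul_assoc]
  push_cast
  rw [hcos, hsin]
  -- the coefficients of `M` and `σ * M * σ` also need `sin² + cos² = 1` and `I² = -1`
  match_scalars <;> first
    | ring1
    | linear_combination Complex.sin_sq_add_cos_sq ((t : ℂ) / 2) -
        Complex.sin ((t : ℂ) / 2) ^ 2 * Complex.I_sq

theorem rotChain_succ_update_castSucc (n : ℕ)
    (W : Fin (n + 2) → Matrix (Fin D) (Fin D) ℂ →ₗ[ℂ] Matrix (Fin D) (Fin D) ℂ)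
    (ρ : Matrix (Fin D) (Fin D) ℂ) (θ u : ℝ) (j : Fin n) :
    rotChain σ (n + 1) W (Function.update (fun _ => θ) j.castSucc u) ρ =
      W (Fin.last (n + 1)) (pauliRotChannel σ θ
        (rotChain σ n (fun i => W i.castSucc) (Function.update (fun _ => θ) j u) ρ)) := by
  rw [rotChain, Function.update_of_ne (Fin.castSucc_ne_last j).symm]
  exact congrArg _ (congrArg _ (congrArg (rotChain σ n _ · ρ)
    (Function.update_comp_eq_of_injective _ (Fin.castSucc_injective n) j u)))

theorem rotChain_succ_update_last (n : ℕ)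
    (W : Fin (n + 2) → Matrix (Fin D) (Fin D) ℂ →ₗ[ℂ] Matrix (Fin D) (Fin D) ℂ)
    (ρ : Matrix (Fin D) (Fin D) ℂ) (θ u : ℝ) :
    rotChain σ (n + 1) W (Function.update (fun _ => θ) (Fin.last n) u) ρ =
      W (Fin.last (n + 1))
        (pauliRotChannel σ u (rotChain σ n (fun i => W i.castSucc) (fun _ => θ) ρ)) := by
  simp [rotChain, Fin.castSucc_ne_last]

theorem hasDerivAt_rotChain_const (hherm : σᴴ = σ) (ρ : Matrix (Fin D) (Fin D) ℂ) (n : ℕ)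
    (W : Fin (n + 1) → Matrix (Fin D) (Fin D) ℂ →ₗ[ℂ] Matrix (Fin D) (Fin D) ℂ)
    (L : Matrix (Fin D) (Fin D) ℂ →ₗ[ℂ] ℂ) (θ : ℝ) :
    HasDerivAt (fun t => L (rotChain σ n W (fun _ => t) ρ))
      (∑ i : Fin n, ∑ s ∈ ({-1, 1} : Finset ℝ),
        (s : ℂ) / 2 * L (rotChain σ n W (Function.update (fun _ => θ) i (θ + s * (π / 2))) ρ)) θ := by
  induction n generalizing L with
  | zero => simpa [rotChain] using hasDerivAt_const θ (L (W 0 ρ))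
  | succ n ih =>
    let Lk : Fin 3 → Matrix (Fin D) (Fin D) ℂ →ₗ[ℂ] ℂ :=
      fun k => L ∘ₗ W (Fin.last (n + 1)) ∘ₗ pauliRotComponent σ k
    have hsplit : ∀ t M, L (W (Fin.last (n + 1)) (pauliRotChannel σ t M)) =
        ∑ k, trigBasis k t * Lk k M := fun t M => by
      simp [Lk, pauliRotChannel_eq_sum σ hherm]
    have hderiv := HasDerivAt.fun_sum (u := Finset.univ) fun k _ =>
      (trigBasis_hasDerivAt k θ).fun_mul (ih (fun i => W i.castSucc) (Lk k))
    refine (hderiv.congr_deriv ?_).congr_of_eventuallyEq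
      (Filter.Eventually.of_forall fun t => hsplit t _)
    rw [Fin.sum_univ_castSucc (n := n)]
    simp only [rotChain_succ_update_castSucc, rotChain_succ_update_last, hsplit, Finset.mul_sum,
      Finset.sum_mul, Finset.sum_add_distrib]
    rw [add_comm]
    congr 1
    -- shifts of the earlier gates, from the induction hypothesis
    · rw [Finset.sum_comm]
      refine Finset.sum_congr rfl fun j _ => ?_
      rw [Finset.sum_comm]
      exact Finset.sum_congr rfl fun _ _ => Finset.sum_congr rfl fun _ _ => by ring
    -- shifts of the last gate, from `trigBasis_hasDerivAt`
    · rw [Finset.sum_comm]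
      exact Finset.sum_congr rfl fun _ _ => Finset.sum_congr rfl fun _ _ => by ring

end RotChain

theorem unbiased_gradient_estimator_general {D : ℕ} (σ : Matrix (Fin D) (Fin D) ℂ)
    (hherm : σᴴ = σ) (n : ℕ)
    (W : Fin (n + 1) → Matrix (Fin D) (Fin D) ℂ →ₗ[ℂ] Matrix (Fin D) (Fin D) ℂ)
    (ρ : Matrix (Fin D) (Fin D) ℂ)
    {X : Type*} [Fintype X] (Pi_x : X → Matrix (Fin D) (Fin D) ℂ) (lam : X → ℝ)
    (θ : ℝ) :
    HasDerivAt
      (fun t : ℝ => ∑ x : X, (lam x : ℂ) * (Pi_x x * rotChain σ n W (fun _ => t) ρ).trace)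
      (∑ i : Fin n, ∑ s ∈ ({-1, 1} : Finset ℝ), ∑ x : X,
        ((1 / (n : ℂ)) * (1 / 2) *
          (Pi_x x * rotChain σ n W (Function.update (fun _ => θ) i (θ + s * (π / 2))) ρ).trace *
          ((n : ℂ) * (s : ℂ) * (lam x : ℂ))))
      θ := by
  let cost : Matrix (Fin D) (Fin D) ℂ →ₗ[ℂ] ℂ :=
    ∑ x, (lam x : ℂ) • (Matrix.traceLinearMap (Fin D) ℂ ℂ ∘ₗ LinearMap.mulLeft ℂ (Pi_x x))
  have hcost : ∀ M, cost M = ∑ x, (lam x : ℂ) * (Pi_x x * M).trace := fun M => by simp [cost]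
  simp only [← hcost]
  refine (hasDerivAt_rotChain_const σ hherm ρ n W cost θ).congr_deriv ?_
  refine Finset.sum_congr rfl fun i _ => Finset.sum_congr rfl fun s _ => ?_
  have hn : (n : ℂ) ≠ 0 := Nat.cast_ne_zero.mpr i.pos.ne'
  rw [hcost, Finset.mul_sum]
  exact Finset.sum_congr rfl fun x _ => by field_simp

/-- Unbiased gradient estimator: sampling `i` uniformly from `{0,…,n−1}`, `s` uniformly
from `{−1,+1}` and then an outcome `x` from the shifted-circuit output distribution
`Q(x|s,i) = tr[Π_x 𝒬^{s,i}_θ(ρ)]`, the random variable `n·s·λ(x)` has expectation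
equal to `f'(θ)` where `f(θ) = Σ_x λ(x) Q_θ(x)`. -/
theorem unbiased_gradient_estimator {D : ℕ} (σ : Matrix (Fin D) (Fin D) ℂ)
    (hherm : σᴴ = σ) (hinv : σ * σ = 1) (n : ℕ) (hn : 0 < n)
    (W : Fin (n + 1) → Matrix (Fin D) (Fin D) ℂ →ₗ[ℂ] Matrix (Fin D) (Fin D) ℂ)
    (ρ : Matrix (Fin D) (Fin D) ℂ)
    {X : Type*} [Fintype X] (Pi_x : X → Matrix (Fin D) (Fin D) ℂ) (lam : X → ℝ)
    (θ : ℝ) :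
    HasDerivAt
      (fun t : ℝ => ∑ x : X, (lam x : ℂ) * (Pi_x x * rotChain σ n W (fun _ => t) ρ).trace)
      (∑ i : Fin n, ∑ s ∈ ({-1, 1} : Finset ℝ), ∑ x : X,
        ((1 / (n : ℂ)) * (1 / 2) *
          (Pi_x x * rotChain σ n W (Function.update (fun _ => θ) i (θ + s * (π / 2))) ρ).trace *
          ((n : ℂ) * (s : ℂ) * (lam x : ℂ))))
      θ :=
  unbiased_gradient_estimator_general σ hherm n W ρ Pi_x lam θ
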